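/- For any two complex numbers z₁, z₂ with |z₁| < ξ and |z₂| < ξ (where 0 < ξ ≤ 1), one has |(sin z₂ − z₂) − (sin z₁ − z₁)| ≤ (1/2)|z₂ − z₁|·ξ²·cosh ξ. -/

import Mathlib

/-!
Comparing Taylor series term by term, using `(2n + 2)! ≥ 2 · (2n)!`, gives
`‖cos z - 1‖ ≤ ‖z‖² / 2 · cosh ‖z‖`. Since `cos z - 1` is the derivative of `sin z - z`,
the mean value inequality on the closed disc of radius `ξ` yields the claim.
-/

open Complex
open scoped Nat

theorem Nat.two_mul_factorial_le_factorial_add_two (n : ℕ) : 2 * n ! ≤ (n + 2)! := by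
  rw [Nat.factorial_succ (n + 1)]
  exact Nat.mul_le_mul (by omega) (Nat.factorial_le (by omega))

theorem Complex.norm_cos_sub_one_le (z : ℂ) : ‖cos z - 1‖ ≤ ‖z‖ ^ 2 / 2 * Real.cosh ‖z‖ := by
  have hcos : HasSum (fun n : ℕ => (-1) ^ (n + 1) * z ^ (2 * (n + 1)) / ↑(2 * (n + 1))!)
      (cos z - 1) := by
    simpa using (hasSum_nat_add_iff' 1).mpr (Complex.hasSum_cos z)
  refine hcos.norm_le_of_bounded ((Real.hasSum_cosh ‖z‖).mul_left (‖z‖ ^ 2 / 2)) fun n => ?_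
  have hfact : (2 * (2 * n)! : ℝ) ≤ (2 * (n + 1))! := by
    exact_mod_cast Nat.two_mul_factorial_le_factorial_add_two (2 * n)
  calc ‖(-1) ^ (n + 1) * z ^ (2 * (n + 1)) / ↑(2 * (n + 1))!‖
      = ‖z‖ ^ 2 * ‖z‖ ^ (2 * n) / (2 * (n + 1))! := by
        simp only [norm_div, norm_mul, norm_pow, norm_neg, norm_one, one_pow, one_mul,
          Complex.norm_natCast]
        ring
    _ ≤ ‖z‖ ^ 2 * ‖z‖ ^ (2 * n) / (2 * (2 * n)!) := by gcongr
    _ = ‖z‖ ^ 2 / 2 * (‖z‖ ^ (2 * n) / (2 * n)!) := by ring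

theorem Complex.norm_sin_sub_self_sub_le {r : ℝ} {z₁ z₂ : ℂ} (h₁ : ‖z₁‖ ≤ r) (h₂ : ‖z₂‖ ≤ r) :
    ‖(sin z₂ - z₂) - (sin z₁ - z₁)‖ ≤ r ^ 2 / 2 * Real.cosh r * ‖z₂ - z₁‖ := by
  refine (convex_closedBall (0 : ℂ) r).norm_image_sub_le_of_norm_hasDerivWithin_le
    (f' := fun z => cos z - 1)
    (fun z _ => ((hasDerivAt_sin z).sub (hasDerivAt_id z)).hasDerivWithinAt)
    (fun z hz => ?_) (mem_closedBall_zero_iff.mpr h₁) (mem_closedBall_zero_iff.mpr h₂)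
  have hzr : ‖z‖ ≤ r := mem_closedBall_zero_iff.mp hz
  have hcosh : Real.cosh ‖z‖ ≤ Real.cosh r :=
    Real.cosh_le_cosh.mpr (abs_le_abs_of_nonneg (norm_nonneg z) hzr)
  calc ‖cos z - 1‖ ≤ ‖z‖ ^ 2 / 2 * Real.cosh ‖z‖ := norm_cos_sub_one_le z
    _ ≤ r ^ 2 / 2 * Real.cosh r := by gcongr

theorem stmt5_general (ξ : ℝ) (z₁ z₂ : ℂ)
    (hz₁ : ‖z₁‖ < ξ) (hz₂ : ‖z₂‖ < ξ) :
    ‖(Complex.sin z₂ - z₂) - (Complex.sin z₁ - z₁)‖ ≤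
      (1/2) * ‖z₂ - z₁‖ * ξ^2 * Real.cosh ξ := by
  calc ‖(Complex.sin z₂ - z₂) - (Complex.sin z₁ - z₁)‖
      ≤ ξ ^ 2 / 2 * Real.cosh ξ * ‖z₂ - z₁‖ := norm_sin_sub_self_sub_le hz₁.le hz₂.le
    _ = (1/2) * ‖z₂ - z₁‖ * ξ^2 * Real.cosh ξ := by ring

theorem stmt5 (ξ : ℝ) (h0 : 0 < ξ) (h1 : ξ ≤ 1) (z₁ z₂ : ℂ)
    (hz₁ : ‖z₁‖ < ξ) (hz₂ : ‖z₂‖ < ξ) :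
    ‖(Complex.sin z₂ - z₂) - (Complex.sin z₁ - z₁)‖ ≤
      (1/2) * ‖z₂ - z₁‖ * ξ^2 * Real.cosh ξ :=
  stmt5_general ξ z₁ z₂ hz₁ hz₂
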